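/- If the bottom-right weight K_{k-1,k-1} of the kernel equals 1, then the TL-padded convolution map X ↦ Y on n×n images is a linear bijection, and the determinant of its matrix M equals 1. -/

import Mathlib

/-- TL-padded convolution of an `n × n` image `X` with a `k × k` kernel `K`:
`Y i j = ∑_{0 ≤ p,q < k} X (i-p) (j-q) * K (k-1-p) (k-1-q)`, out-of-range terms zero. -/
def tlConv (n k : ℕ) (K : ℕ → ℕ → ℝ) (X : Fin n → Fin n → ℝ) (i j : Fin n) : ℝ :=
  ∑ p ∈ Finset.range k, ∑ q ∈ Finset.range k,
    if h : p ≤ (i : ℕ) ∧ q ≤ (j : ℕ) then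
      X ⟨(i : ℕ) - p, Nat.lt_of_le_of_lt (Nat.sub_le _ _) i.isLt⟩
        ⟨(j : ℕ) - q, Nat.lt_of_le_of_lt (Nat.sub_le _ _) j.isLt⟩ *
        K (k - 1 - p) (k - 1 - q)
    else 0

/-- The convolution matrix of the TL-padded convolution, in row-major ordering. -/
def convMatrix (n k : ℕ) (K : ℕ → ℕ → ℝ) :
    Matrix (Fin n × Fin n) (Fin n × Fin n) ℝ := fun a b =>
  if (b.1 : ℕ) ≤ (a.1 : ℕ) ∧ (b.2 : ℕ) ≤ (a.2 : ℕ) ∧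
      (a.1 : ℕ) - (b.1 : ℕ) < k ∧ (a.2 : ℕ) - (b.2 : ℕ) < k then
    K (k - 1 - ((a.1 : ℕ) - (b.1 : ℕ))) (k - 1 - ((a.2 : ℕ) - (b.2 : ℕ)))
  else 0

/-!
Order the pixels lexicographically. Output pixel `(i, j)` only involves input pixels `(i', j')`
with `i' ≤ i` and `j' ≤ j`, and pixel `(i, j)` itself with weight `K (k-1) (k-1)`. Hence the
convolution matrix is lower triangular with constant diagonal `K (k-1) (k-1)`, its determinant is
`K (k-1) (k-1) ^ (n * n)`, and the convolution, being this matrix acting on the flattened image, is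
bijective as soon as that weight is nonzero.
-/

open Finset Matrix

namespace Matrix

variable {α β R : Type*} [Fintype α] [Fintype β] [LinearOrder α] [LinearOrder β] [CommRing R]

/-- The lexicographic order is a linear extension of the product order. -/
theorem det_of_lowerTriangular_prod (M : Matrix (α × β) (α × β) R)
    (hM : ∀ a b, ¬ b ≤ a → M a b = 0) : M.det = ∏ a, M a a := by
  rw [← det_reindex_self toLex M, det_of_isLowerTriangular]
  · exact Fintype.prod_equiv toLex.symm _ _ fun _ => rfl
  · intro a b hab
    exact hM _ _ fun hle => (Prod.Lex.toLex_mono hle).not_gt hab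

end Matrix

section Reindex

variable {M : Type*} [AddCommMonoid M] {n : ℕ} (k : ℕ)

theorem Fin.sum_ite_sub_lt (i : Fin n) (g : ℕ → M) :
    ∑ b : Fin n, (if (b : ℕ) ≤ i ∧ (i : ℕ) - b < k then g (i - b) else 0)
      = ∑ p ∈ range k, if p ≤ (i : ℕ) then g p else 0 := by
  rw [← sum_filter, ← sum_filter]
  refine sum_nbij' (fun b => i - b) (fun p => ⟨i - p, by omega⟩) ?_ ?_ ?_ ?_
    fun _ _ => rfl <;> simp only [mem_filter, mem_univ, true_and, mem_range]
  · omega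
  · omega
  · exact fun b hb => Fin.ext (Nat.sub_sub_self hb.1)
  · omega

theorem Fin.sum_sum_ite_sub_lt (i j : Fin n) (g : ℕ → ℕ → M) :
    ∑ b₁ : Fin n, ∑ b₂ : Fin n,
      (if (b₁ : ℕ) ≤ i ∧ (b₂ : ℕ) ≤ j ∧ (i : ℕ) - b₁ < k ∧ (j : ℕ) - b₂ < k then
        g (i - b₁) (j - b₂) else 0)
      = ∑ p ∈ range k, ∑ q ∈ range k, if p ≤ (i : ℕ) ∧ q ≤ (j : ℕ) then g p q else 0 := by
  calc _ = ∑ b₁ : Fin n, if (b₁ : ℕ) ≤ i ∧ (i : ℕ) - b₁ < k then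
        ∑ b₂ : Fin n, (if (b₂ : ℕ) ≤ j ∧ (j : ℕ) - b₂ < k then g (i - b₁) (j - b₂) else 0)
        else 0 := by
        refine sum_congr rfl fun b₁ _ => ?_
        split_ifs with h₁
        · exact sum_congr rfl fun b₂ _ => if_congr (by tauto) rfl rfl
        · exact sum_eq_zero fun b₂ _ => if_neg (by tauto)
    _ = ∑ p ∈ range k, if p ≤ (i : ℕ) then
        ∑ q ∈ range k, (if q ≤ (j : ℕ) then g p q else 0) else 0 := by
        simp_rw [Fin.sum_ite_sub_lt k j]
        exact Fin.sum_ite_sub_lt k i fun p => ∑ q ∈ range k, if q ≤ (j : ℕ) then g p q else 0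
    _ = _ := by simp_rw [ite_and, sum_ite_irrel, sum_const_zero]

end Reindex

section Convolution

variable (n k : ℕ) (K : ℕ → ℕ → ℝ)

theorem tlConv_apply_eq_mulVec (X : Fin n → Fin n → ℝ) (i j : Fin n) :
    tlConv n k K X i j = (convMatrix n k K *ᵥ Function.uncurry X) (i, j) := by
  set g : ℕ → ℕ → ℝ := fun p q =>
    X ⟨i - p, by omega⟩ ⟨j - q, by omega⟩ * K (k - 1 - p) (k - 1 - q)
  calc tlConv n k K X i j
      = ∑ p ∈ range k, ∑ q ∈ range k, if p ≤ (i : ℕ) ∧ q ≤ (j : ℕ) then g p q else 0 := by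
        simp only [tlConv, dite_eq_ite, g]
    _ = ∑ b₁ : Fin n, ∑ b₂ : Fin n,
          if (b₁ : ℕ) ≤ i ∧ (b₂ : ℕ) ≤ j ∧ (i : ℕ) - b₁ < k ∧ (j : ℕ) - b₂ < k then
            g (i - b₁) (j - b₂) else 0 := (Fin.sum_sum_ite_sub_lt k i j g).symm
    _ = _ := by
        rw [mulVec, dotProduct, Fintype.sum_prod_type]
        refine sum_congr rfl fun b₁ _ => sum_congr rfl fun b₂ _ => ?_
        simp only [convMatrix, ite_mul, zero_mul, Function.uncurry_apply_pair]
        refine ite_congr rfl (fun h => ?_) fun _ => rfl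
        simp only [g, Nat.sub_sub_self h.1, Nat.sub_sub_self h.2.1, Fin.eta, mul_comm]

theorem tlConv_eq_curry_mulVec_uncurry :
    tlConv n k K = Function.curry ∘ (convMatrix n k K *ᵥ ·) ∘ Function.uncurry := by
  funext X i j
  exact tlConv_apply_eq_mulVec n k K X i j

theorem convMatrix_eq_zero_of_not_le {a b : Fin n × Fin n} (h : ¬ b ≤ a) :
    convMatrix n k K a b = 0 :=
  if_neg fun h' => h ⟨h'.1, h'.2.1⟩

theorem det_convMatrix (hk : 0 < k) : (convMatrix n k K).det = K (k - 1) (k - 1) ^ (n * n) := by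
  rw [det_of_lowerTriangular_prod _ fun _ _ => convMatrix_eq_zero_of_not_le n k K]
  simp [convMatrix, hk]

theorem tlConv_bijective (hk : 0 < k) (hK : K (k - 1) (k - 1) ≠ 0) :
    Function.Bijective (tlConv n k K) := by
  have hM : IsUnit (convMatrix n k K) := by
    rw [isUnit_iff_isUnit_det, det_convMatrix n k K hk]
    exact (isUnit_iff_ne_zero.2 hK).pow _
  rw [tlConv_eq_curry_mulVec_uncurry]
  exact (Equiv.curry _ _ _).bijective.comp
    ⟨mulVec_injective_iff_isUnit.2 hM, mulVec_surjective_iff_isUnit.2 hM⟩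
    |>.comp (Equiv.curry _ _ _).symm.bijective

end Convolution

/-- if the bottom-right kernel weight equals 1, then the TL-padded
convolution map `X ↦ Y` is a (linear) bijection and the determinant of its
convolution matrix equals 1. -/
theorem tlConv_bijective_det_one (n k : ℕ) (hk : 0 < k) (K : ℕ → ℕ → ℝ)
    (h1 : K (k - 1) (k - 1) = 1) :
    Function.Bijective (tlConv n k K) ∧ (convMatrix n k K).det = 1 :=
  ⟨tlConv_bijective n k K hk (h1 ▸ one_ne_zero), by rw [det_convMatrix n k K hk, h1, one_pow]⟩
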